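/- For any permutation π of S with reverse permutation π' (so π'(i) = π(n+1−i)), the search cost satisfies c_{f,g}(π) = c_{g^#, f^#}(π'), where c_{f,g}(π) = ∑_j (g(S_j^π) − g(S_j^π − j)) f(S_j^π). Consequently min_π c_{f,g}(π) = min_π c_{g^#,f^#}(π). -/

import Mathlib

open Finset

def Submodular {n : ℕ} (f : Finset (Fin n) → ℝ) : Prop :=
  ∀ A B : Finset (Fin n), f (A ∪ B) + f (A ∩ B) ≤ f A + f B

def Supermodular {n : ℕ} (g : Finset (Fin n) → ℝ) : Prop :=
  ∀ A B : Finset (Fin n), g A + g B ≤ g (A ∪ B) + g (A ∩ B)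

def MonotoneSet {n : ℕ} (f : Finset (Fin n) → ℝ) : Prop :=
  ∀ A B : Finset (Fin n), A ⊆ B → f A ≤ f B

/-- The set of elements searched up to and including `j` under search `σ`
(where `σ k` is the element searched at position `k`). -/
def searchSegment {n : ℕ} (σ : Equiv.Perm (Fin n)) (j : Fin n) : Finset (Fin n) :=
  Finset.univ.filter (fun i => σ.symm i ≤ σ.symm j)

/-- Expected search searchCost. -/
def searchCost {n : ℕ} (f g : Finset (Fin n) → ℝ) (σ : Equiv.Perm (Fin n)) : ℝ :=
  ∑ j, (g (searchSegment σ j) - g (searchSegment σ j \ {j})) * f (searchSegment σ j)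

def dual {n : ℕ} (g : Finset (Fin n) → ℝ) (A : Finset (Fin n)) : ℝ :=
  g Finset.univ - g Aᶜ

def reversePerm {n : ℕ} (σ : Equiv.Perm (Fin n)) : Equiv.Perm (Fin n) :=
  (Fin.revPerm).trans σ

def InitialSegment {n : ℕ} (σ : Equiv.Perm (Fin n)) (A : Finset (Fin n)) : Prop :=
  ∀ i j : Fin n, j ∈ A → σ.symm i ≤ σ.symm j → i ∈ A

/-!
Number the elements in search order and let `P k` be the set of the first `k` of them, so that
`∅ = P 0 ⊆ ⋯ ⊆ P n = S`. The reversed search visits the complements of this chain, so the duals,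
evaluated along it, turn back into `f` and `g` on the chain itself:
`c_{f,g}(π) = ∑ (g (P (k+1)) - g (P k)) f (P (k+1))` and
`c_{g^#,f^#}(π') = ∑ (f (P (k+1)) - f (P k)) (g S - g (P k))`.
These agree by summation by parts, the boundary term being `f ∅ (g S - g ∅) = 0`.
Reversal is an involution, so both cost functions take the same values and have the same minimum.
-/

variable {n : ℕ}

def searchPrefix (σ : Equiv.Perm (Fin n)) (m : ℕ) : Finset (Fin n) :=
  univ.filter fun i => (σ.symm i : ℕ) < m

lemma searchPrefix_zero (σ : Equiv.Perm (Fin n)) : searchPrefix σ 0 = ∅ := by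
  simp [searchPrefix]

lemma searchPrefix_self (σ : Equiv.Perm (Fin n)) : searchPrefix σ n = univ := by
  simp [searchPrefix]

lemma searchSegment_eq_searchPrefix (σ : Equiv.Perm (Fin n)) (j : Fin n) :
    searchSegment σ j = searchPrefix σ (σ.symm j + 1) :=
  Finset.ext fun i => by
    simp only [searchSegment, searchPrefix, mem_filter, mem_univ, true_and, Fin.le_def,
      Nat.lt_succ_iff]

lemma searchSegment_sdiff_self (σ : Equiv.Perm (Fin n)) (j : Fin n) :
    searchSegment σ j \ {j} = searchPrefix σ (σ.symm j) :=
  Finset.ext fun i => by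
    simp only [searchSegment, searchPrefix, mem_sdiff, mem_filter, mem_univ, true_and,
      mem_singleton, lt_iff_le_and_ne, ne_eq, Fin.val_inj, Fin.val_fin_le,
      EmbeddingLike.apply_eq_iff_eq]

lemma mem_searchSegment_self (σ : Equiv.Perm (Fin n)) (j : Fin n) : j ∈ searchSegment σ j := by
  simp [searchSegment]

lemma searchSegment_reversePerm (σ : Equiv.Perm (Fin n)) (j : Fin n) :
    searchSegment (reversePerm σ) j = (searchSegment σ j \ {j})ᶜ := by
  rw [searchSegment_sdiff_self]
  exact Finset.ext fun i => by simp [searchSegment, searchPrefix, reversePerm]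

lemma searchSegment_reversePerm_sdiff_self (σ : Equiv.Perm (Fin n)) (j : Fin n) :
    searchSegment (reversePerm σ) j \ {j} = (searchSegment σ j)ᶜ := by
  rw [searchSegment_reversePerm]
  exact Finset.ext fun i => by
    by_cases h : i = j <;> simp [h, mem_searchSegment_self]

lemma searchCost_dual_reversePerm (f g : Finset (Fin n) → ℝ) (σ : Equiv.Perm (Fin n)) :
    searchCost (dual g) (dual f) (reversePerm σ) = ∑ j,
      (f (searchSegment σ j) - f (searchSegment σ j \ {j})) *
        (g univ - g (searchSegment σ j \ {j})) := by
  simp only [searchCost, searchSegment_reversePerm_sdiff_self]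
  simp only [searchSegment_reversePerm, dual, compl_compl]
  exact sum_congr rfl fun j _ => by ring

lemma sum_univ_comp_symm_eq_sum_range {M : Type*} [AddCommMonoid M] (σ : Equiv.Perm (Fin n))
    (F : ℕ → M) : ∑ j, F (σ.symm j) = ∑ k ∈ range n, F k :=
  (Equiv.sum_comp σ.symm fun k : Fin n => F k).trans (Fin.sum_univ_eq_sum_range F n)

lemma searchCost_eq_sum_range (f g : Finset (Fin n) → ℝ) (σ : Equiv.Perm (Fin n)) :
    searchCost f g σ = ∑ k ∈ range n,
      (g (searchPrefix σ (k + 1)) - g (searchPrefix σ k)) * f (searchPrefix σ (k + 1)) := by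
  simp only [searchCost, searchSegment_sdiff_self]
  simp only [searchSegment_eq_searchPrefix]
  exact sum_univ_comp_symm_eq_sum_range σ
    fun k => (g (searchPrefix σ (k + 1)) - g (searchPrefix σ k)) * f (searchPrefix σ (k + 1))

lemma searchCost_dual_reversePerm_eq_sum_range (f g : Finset (Fin n) → ℝ)
    (σ : Equiv.Perm (Fin n)) :
    searchCost (dual g) (dual f) (reversePerm σ) = ∑ k ∈ range n,
      (f (searchPrefix σ (k + 1)) - f (searchPrefix σ k)) *
        (g (searchPrefix σ n) - g (searchPrefix σ k)) := by
  simp only [searchCost_dual_reversePerm, searchSegment_sdiff_self]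
  simp only [searchSegment_eq_searchPrefix, searchPrefix_self]
  exact sum_univ_comp_symm_eq_sum_range σ
    fun k => (f (searchPrefix σ (k + 1)) - f (searchPrefix σ k)) * (g univ - g (searchPrefix σ k))

lemma sum_range_sub_mul_succ_eq_sum_range_sub_mul_sub {R : Type*} [CommRing R] (a b : ℕ → R) (ha : a 0 = 0) (m : ℕ) :
    ∑ k ∈ range m, (b (k + 1) - b k) * a (k + 1) =
      ∑ k ∈ range m, (a (k + 1) - a k) * (b m - b k) := by
  induction m with
  | zero => simp
  | succ m ih =>
    have hsplit : ∀ k, (a (k + 1) - a k) * (b (m + 1) - b k) =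
        (a (k + 1) - a k) * (b m - b k) + (b (m + 1) - b m) * (a (k + 1) - a k) :=
      fun k => by ring
    rw [sum_range_succ, ih, sum_congr rfl fun k _ => hsplit k, sum_add_distrib, ← mul_sum,
      sum_range_sub, sum_range_succ, ha, sub_self, mul_zero]
    ring

theorem searchCost_eq_searchCost_dual_reversePerm (f g : Finset (Fin n) → ℝ) (hf0 : f ∅ = 0)
    (σ : Equiv.Perm (Fin n)) :
    searchCost f g σ = searchCost (dual g) (dual f) (reversePerm σ) := by
  rw [searchCost_eq_sum_range, searchCost_dual_reversePerm_eq_sum_range,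
    sum_range_sub_mul_succ_eq_sum_range_sub_mul_sub (fun m => f (searchPrefix σ m)) (fun m => g (searchPrefix σ m))
      (by rw [searchPrefix_zero, hf0])]

lemma reversePerm_involutive : Function.Involutive (reversePerm (n := n)) := fun σ => by
  ext i
  simp [reversePerm]

theorem searchCost_duality_general {n : ℕ} (f g : Finset (Fin n) → ℝ)
    (hf0 : f ∅ = 0) (π : Equiv.Perm (Fin n)) :
    searchCost f g π = searchCost (dual g) (dual f) (reversePerm π) ∧
      (⨅ τ : Equiv.Perm (Fin n), searchCost f g τ) =
        ⨅ τ : Equiv.Perm (Fin n), searchCost (dual g) (dual f) τ :=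
  ⟨searchCost_eq_searchCost_dual_reversePerm f g hf0 π, by
    simp_rw [searchCost_eq_searchCost_dual_reversePerm f g hf0]
    exact reversePerm_involutive.surjective.iInf_comp (searchCost (dual g) (dual f))⟩

/-- Duality of the search cost: `c_{f,g}(π) = c_{g^#,f^#}(π')` for the reverse
permutation `π'`, hence the minima agree. -/
theorem searchCost_duality {n : ℕ} (f g : Finset (Fin n) → ℝ)
    (hf0 : f ∅ = 0) (hg0 : g ∅ = 0) (π : Equiv.Perm (Fin n)) :
    searchCost f g π = searchCost (dual g) (dual f) (reversePerm π) ∧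
      (⨅ τ : Equiv.Perm (Fin n), searchCost f g τ) =
        ⨅ τ : Equiv.Perm (Fin n), searchCost (dual g) (dual f) τ :=
  searchCost_duality_general f g hf0 π
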